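/- arXiv:1101.1587 — 2 statements merged into one kernel-verified Lean document; each statement's English description precedes it below -/
import Mathlib

section
/- Let A > 0 and let f ∈ C¹([0,1]). For N ≥ 1 let σ_N^A(f)_∞ := inf over all partitions of [0,1] into at most N intervals, each of length at most A N^{−1}, of the global uniform-norm piecewise-constant approximation error. Then liminf_{N→∞} N · σ_N^A(f)_∞ ≥ (1/2) ∫_0^1 |f'(t)| dt. Hence for adaptive piecewise constant approximation the rate N^{−1} is governed from below by (1/2)‖f'‖_{L¹}. -/
open Set Filter MeasureTheory ENNReal

/-- Local piecewise-constant approximation error of `f` on the interval `I`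
in the uniform norm: `e_{1,I}(f)_∞ = inf_c sup_{x ∈ I} |f x - c|`. -/
noncomputable def locErr (f : ℝ → ℝ) (I : Set ℝ) : ℝ :=
  ⨅ c : ℝ, ⨆ x : I, |f x.1 - c|

/-- `σ_N^A(f)_∞`: infimum (in `ℝ≥0∞`, so that it is `∞` when no admissible partition
exists) over all partitions of `[0,1]` into at most `N` intervals, each of length at
most `A/N`, of the global uniform-norm piecewise-constant approximation error. -/
noncomputable def adaptErrA (f : ℝ → ℝ) (A : ℝ) (N : ℕ) : ℝ≥0∞ :=
  sInf { e : ℝ≥0∞ | ∃ M : ℕ, 1 ≤ M ∧ M ≤ N ∧ ∃ a : ℕ → ℝ,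
    a 0 = 0 ∧ a M = 1 ∧ (∀ k < M, a k ≤ a (k + 1)) ∧
    (∀ k < M, a (k + 1) - a k ≤ A / N) ∧
    e = ENNReal.ofReal (⨆ k : Fin M, locErr f (Set.Icc (a k.1) (a (k.1 + 1)))) }

/-!
On an interval `[u, v]` where `f'` oscillates by at most `ε`, the total variation
`∫_u^v |f'|` exceeds `|f v - f u| ≤ 2 e_{1,[u,v]}(f)_∞` by at most `2 ε (v - u)`.
Once the mesh `A / N` is below the modulus of uniform continuity of `f'` for `ε`, summing
over the at most `N` cells of an admissible partition gives `‖f'‖_{L¹} ≤ 2 N σ + 2 ε`.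
-/

lemma locErr_nonneg (f : ℝ → ℝ) (I : Set ℝ) : 0 ≤ locErr f I :=
  le_ciInf fun _ => Real.iSup_nonneg fun _ => abs_nonneg _

lemma abs_sub_le_two_mul_locErr {f : ℝ → ℝ} {I : Set ℝ} (hI : IsCompact I)
    (hf : ContinuousOn f I) {x y : ℝ} (hx : x ∈ I) (hy : y ∈ I) :
    |f x - f y| ≤ 2 * locErr f I := by
  suffices |f x - f y| / 2 ≤ locErr f I by linarith
  refine le_ciInf fun c => ?_
  have hbdd : BddAbove (range fun z : I => |f z.1 - c|) := by
    rw [← image_eq_range (fun z => |f z - c|)]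
    exact hI.bddAbove_image ((hf.sub continuousOn_const).abs)
  have hxc := le_ciSup hbdd ⟨x, hx⟩
  have hyc := le_ciSup hbdd ⟨y, hy⟩
  linarith [abs_sub_le (f x) c (f y), abs_sub_comm c (f y)]

lemma intervalIntegral.integral_abs_le_abs_integral_add_two_mul {g : ℝ → ℝ} {u v : ℝ}
    (huv : u ≤ v) (hg : IntervalIntegrable g volume u v) (c : ℝ) :
    ∫ t in u..v, |g t| ≤ |∫ t in u..v, g t| + 2 * ∫ t in u..v, |g t - c| := by
  have hgc : IntervalIntegrable (fun t => g t - c) volume u v := hg.sub intervalIntegrable_const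
  have hpointwise : ∫ t in u..v, |g t| ≤ ∫ t in u..v, (|c| + |g t - c|) :=
    integral_mono_on huv hg.abs (intervalIntegrable_const.add hgc.abs)
      fun t _ => by linarith [abs_sub_abs_le_abs_sub (g t) c]
  have hconst : (v - u) * |c| ≤ |∫ t in u..v, g t| + ∫ t in u..v, |g t - c| :=
    calc (v - u) * |c| = |∫ t in u..v, (g t - (g t - c))| := by
          simp [abs_mul, abs_of_nonneg (sub_nonneg.2 huv)]
      _ = |(∫ t in u..v, g t) - ∫ t in u..v, (g t - c)| := by rw [integral_sub hg hgc]
      _ ≤ |∫ t in u..v, g t| + |∫ t in u..v, (g t - c)| := abs_sub _ _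
      _ ≤ |∫ t in u..v, g t| + ∫ t in u..v, |g t - c| :=
          add_le_add_right (abs_integral_le_integral_abs huv) _
  rw [integral_add intervalIntegrable_const hgc.abs, integral_const, smul_eq_mul] at hpointwise
  linarith

lemma integral_abs_deriv_le_two_mul_locErr {f f' : ℝ → ℝ} {u v ε : ℝ} (huv : u ≤ v)
    (hf : ContinuousOn f (Icc u v)) (hderiv : ∀ x ∈ Ioo u v, HasDerivAt f (f' x) x)
    (hf' : ContinuousOn f' (Icc u v)) (hosc : ∀ t ∈ Icc u v, |f' t - f' u| ≤ ε) :
    ∫ t in u..v, |f' t| ≤ 2 * locErr f (Icc u v) + 2 * ε * (v - u) := by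
  have hint : IntervalIntegrable f' volume u v :=
    hf'.intervalIntegrable_of_Icc huv
  have hftc : ∫ t in u..v, f' t = f v - f u :=
    intervalIntegral.integral_eq_sub_of_hasDerivAt_of_le huv hf hderiv hint
  have hosc_int : ∫ t in u..v, |f' t - f' u| ≤ ε * (v - u) :=
    calc ∫ t in u..v, |f' t - f' u| ≤ ∫ _ in u..v, ε :=
          intervalIntegral.integral_mono_on huv (hint.sub intervalIntegrable_const).abs
            intervalIntegrable_const hosc
      _ = ε * (v - u) := by rw [intervalIntegral.integral_const, smul_eq_mul, mul_comm]
  have hjump : |f v - f u| ≤ 2 * locErr f (Icc u v) :=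
    abs_sub_le_two_mul_locErr isCompact_Icc hf (right_mem_Icc.2 huv) (left_mem_Icc.2 huv)
  have := intervalIntegral.integral_abs_le_abs_integral_add_two_mul huv hint (f' u)
  rw [hftc] at this
  linarith

lemma mem_Icc_of_partition {a : ℕ → ℝ} {M : ℕ} (ha0 : a 0 = 0) (haM : a M = 1)
    (hmono : ∀ k < M, a k ≤ a (k + 1)) {k : ℕ} (hk : k ≤ M) : a k ∈ Icc (0 : ℝ) 1 := by
  have hb : Monotone fun i : Fin (M + 1) => a i :=
    Fin.monotone_iff_le_succ.2 fun i => hmono i i.2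
  exact ⟨ha0 ▸ hb (Fin.zero_le ⟨k, by omega⟩), haM ▸ hb (Fin.le_last ⟨k, by omega⟩)⟩

lemma integral_abs_deriv_le_of_partition {f f' : ℝ → ℝ} {δ ε E : ℝ} {M : ℕ} {a : ℕ → ℝ}
    (hf : ContinuousOn f (Icc 0 1)) (hderiv : ∀ x ∈ Ioo (0 : ℝ) 1, HasDerivAt f (f' x) x)
    (hf' : ContinuousOn f' (Icc 0 1))
    (hδ : ∀ x ∈ Icc (0 : ℝ) 1, ∀ y ∈ Icc (0 : ℝ) 1, dist x y < δ → dist (f' x) (f' y) < ε)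
    (ha0 : a 0 = 0) (haM : a M = 1) (hmono : ∀ k < M, a k ≤ a (k + 1))
    (hmesh : ∀ k < M, a (k + 1) - a k < δ)
    (hE : ∀ k < M, locErr f (Icc (a k) (a (k + 1))) ≤ E) :
    ∫ t in (0 : ℝ)..1, |f' t| ≤ 2 * M * E + 2 * ε := by
  have hsub : ∀ k < M, Icc (a k) (a (k + 1)) ⊆ Icc 0 1 := fun k hk =>
    Icc_subset_Icc (mem_Icc_of_partition ha0 haM hmono hk.le).1
      (mem_Icc_of_partition ha0 haM hmono hk).2
  have hcell : ∀ k < M, ∫ t in a k..a (k + 1), |f' t| ≤ 2 * E + 2 * ε * (a (k + 1) - a k) := by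
    intro k hk
    have hosc : ∀ t ∈ Icc (a k) (a (k + 1)), |f' t - f' (a k)| ≤ ε := by
      intro t ht
      have hdist : dist t (a k) < δ := by
        rw [Real.dist_eq, abs_of_nonneg (sub_nonneg.2 ht.1)]
        linarith [ht.2, hmesh k hk]
      exact (hδ t (hsub k hk ht) (a k) (hsub k hk (left_mem_Icc.2 (hmono k hk))) hdist).le
    have hderiv_cell : ∀ x ∈ Ioo (a k) (a (k + 1)), HasDerivAt f (f' x) x := fun x hx =>
      hderiv x ⟨(hsub k hk (left_mem_Icc.2 (hmono k hk))).1.trans_lt hx.1,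
        hx.2.trans_le (hsub k hk (right_mem_Icc.2 (hmono k hk))).2⟩
    linarith [hE k hk, integral_abs_deriv_le_two_mul_locErr (hmono k hk) (hf.mono (hsub k hk))
      hderiv_cell (hf'.mono (hsub k hk)) hosc]
  have hint : ∀ k < M, IntervalIntegrable (fun t => |f' t|) volume (a k) (a (k + 1)) :=
    fun k hk => ((hf'.mono (hsub k hk)).abs).intervalIntegrable_of_Icc (hmono k hk)
  calc ∫ t in (0 : ℝ)..1, |f' t|
      = ∑ k ∈ Finset.range M, ∫ t in a k..a (k + 1), |f' t| := by
        rw [intervalIntegral.sum_integral_adjacent_intervals hint, ha0, haM]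
    _ ≤ ∑ k ∈ Finset.range M, (2 * E + 2 * ε * (a (k + 1) - a k)) :=
        Finset.sum_le_sum fun k hk => hcell k (Finset.mem_range.1 hk)
    _ = 2 * M * E + 2 * ε := by
        rw [Finset.sum_add_distrib, Finset.sum_const, ← Finset.mul_sum, Finset.sum_range_sub,
          ha0, haM, Finset.card_range, nsmul_eq_mul]
        ring

lemma ofReal_sub_le_mul_adaptErrA {f f' : ℝ → ℝ} {A δ ε : ℝ} {N : ℕ} (hN : 0 < N)
    (hAN : A / N < δ)
    (hf : ContinuousOn f (Icc 0 1)) (hderiv : ∀ x ∈ Ioo (0 : ℝ) 1, HasDerivAt f (f' x) x)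
    (hf' : ContinuousOn f' (Icc 0 1))
    (hδ : ∀ x ∈ Icc (0 : ℝ) 1, ∀ y ∈ Icc (0 : ℝ) 1, dist x y < δ → dist (f' x) (f' y) < ε) :
    ENNReal.ofReal ((1 / 2) * (∫ t in (0 : ℝ)..1, |f' t|) - ε) ≤ N * adaptErrA f A N := by
  have hN0 : (N : ℝ≥0∞) ≠ 0 := by exact_mod_cast hN.ne'
  rw [mul_comm (N : ℝ≥0∞), ← ENNReal.div_le_iff_le_mul (.inl hN0) (.inl (natCast_ne_top N))]
  refine le_sInf ?_
  rintro _ ⟨M, hM1, hMN, a, ha0, haM, hmono, hlen, rfl⟩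
  set E := ⨆ k : Fin M, locErr f (Icc (a k.1) (a (k.1 + 1)))
  have hE : ∀ k < M, locErr f (Icc (a k) (a (k + 1))) ≤ E := fun k hk =>
    le_ciSup (f := fun k : Fin M => locErr f (Icc (a k.1) (a (k.1 + 1))))
      (finite_range _).bddAbove ⟨k, hk⟩
  have hE0 : 0 ≤ E := (locErr_nonneg _ _).trans (hE 0 hM1)
  have hbound := integral_abs_deriv_le_of_partition hf hderiv hf' hδ ha0 haM hmono
    (fun k hk => (hlen k hk).trans_lt hAN) hE
  have hMN' : (M : ℝ) ≤ N := by exact_mod_cast hMN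
  rw [ENNReal.div_le_iff_le_mul (.inl hN0) (.inl (natCast_ne_top N)), ← ofReal_natCast,
    ← ENNReal.ofReal_mul hE0]
  exact ENNReal.ofReal_le_ofReal (by nlinarith)

theorem stmt5_general (A : ℝ) (f f' : ℝ → ℝ)
    (hderiv : ∀ x ∈ Set.Icc (0:ℝ) 1, HasDerivWithinAt f (f' x) (Set.Icc 0 1) x)
    (hcont : ContinuousOn f' (Set.Icc 0 1)) :
    ENNReal.ofReal ((1 / 2) * ∫ t in Set.Icc (0:ℝ) 1, |f' t|) ≤
      Filter.liminf (fun N : ℕ => (N : ℝ≥0∞) * adaptErrA f A N) Filter.atTop := by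
  have hf : ContinuousOn f (Icc 0 1) := fun x hx => (hderiv x hx).continuousWithinAt
  have hderiv' : ∀ x ∈ Ioo (0 : ℝ) 1, HasDerivAt f (f' x) x := fun x hx =>
    (hderiv x (Ioo_subset_Icc_self hx)).hasDerivAt (Icc_mem_nhds hx.1 hx.2)
  rw [integral_Icc_eq_integral_Ioc, ← intervalIntegral.integral_of_le zero_le_one]
  refine ENNReal.le_of_forall_pos_le_add fun ε hε _ => ?_
  obtain ⟨δ, hδ, hmod⟩ := Metric.uniformContinuousOn_iff.1
    (isCompact_Icc.uniformContinuousOn_of_continuous hcont) ε hε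
  obtain ⟨N₀, hN₀⟩ := exists_nat_gt (A / δ)
  have hlow : ENNReal.ofReal ((1 / 2) * (∫ t in (0 : ℝ)..1, |f' t|) - ε) ≤
      liminf (fun N : ℕ => (N : ℝ≥0∞) * adaptErrA f A N) atTop := by
    refine le_liminf_of_le (by isBoundedDefault) ?_
    filter_upwards [eventually_gt_atTop N₀] with N hN
    have hN0 : 0 < N := N₀.zero_le.trans_lt hN
    have hNpos : (0 : ℝ) < N := by exact_mod_cast hN0
    have hAN : A / N < δ := by
      rw [div_lt_iff₀ hNpos, ← div_lt_iff₀' hδ]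
      exact hN₀.trans (by exact_mod_cast hN)
    exact ofReal_sub_le_mul_adaptErrA hN0 hAN hf hderiv' hcont hmod
  calc ENNReal.ofReal ((1 / 2) * ∫ t in (0 : ℝ)..1, |f' t|)
      = ENNReal.ofReal ((1 / 2) * (∫ t in (0 : ℝ)..1, |f' t|) - ε + ε) := by rw [sub_add_cancel]
    _ ≤ ENNReal.ofReal ((1 / 2) * (∫ t in (0 : ℝ)..1, |f' t|) - ε) + ENNReal.ofReal ε :=
        ENNReal.ofReal_add_le
    _ ≤ _ := by rw [ENNReal.ofReal_coe_nnreal]; exact add_le_add_left hlow _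

/-- Lower bound for adaptive piecewise constant approximation of a `C¹` function,
over partitions into intervals of length at most `A N⁻¹`:
`liminf_N N σ_N^A(f)_∞ ≥ (1/2)‖f'‖_{L¹}`. -/
theorem stmt5 (A : ℝ) (hA : 0 < A) (f f' : ℝ → ℝ)
    (hderiv : ∀ x ∈ Set.Icc (0:ℝ) 1, HasDerivWithinAt f (f' x) (Set.Icc 0 1) x)
    (hcont : ContinuousOn f' (Set.Icc 0 1)) :
    ENNReal.ofReal ((1 / 2) * ∫ t in Set.Icc (0:ℝ) 1, |f' t|) ≤
      Filter.liminf (fun N : ℕ => (N : ℝ≥0∞) * adaptErrA f A N) Filter.atTop :=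
  stmt5_general A f f' hderiv hcont
end

section
/- Let f : [0,1] → ℝ be absolutely continuous with f' ∈ L¹([0,1]), extend f' by 0 to ℝ, and let M_{f'}(x) := sup_{r>0} (1/(2r)) ∫_{x−r}^{x+r} |f'(t)| dt be its Hardy–Littlewood maximal function. If M_{f'} ∈ L¹([0,1]), then for every N ≥ 1 there exists a partition of [0,1] into at most N dyadic intervals (intervals of the form 2^{−j}[n, n+1] with j ≥ 0 and 0 ≤ n < 2^j) such that the global uniform-norm piecewise-constant approximation error over this partition is at most 4 ‖M_{f'}‖_{L¹([0,1])} N^{−1}. -/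
open Set MeasureTheory ENNReal

/-- The Hardy–Littlewood maximal function of `g`:
`M_g(x) = sup_{r>0} |B(x,r)|⁻¹ ∫_{B(x,r)} |g|`, valued in `ℝ≥0∞`. -/
noncomputable def maxFn (g : ℝ → ℝ) (x : ℝ) : ℝ≥0∞ :=
  ⨆ r : {r : ℝ // 0 < r},
    (∫⁻ t in Set.Ioo (x - r.1) (x + r.1), ENNReal.ofReal |g t|) / ENNReal.ofReal (2 * r.1)

/-- The dyadic interval `2^{-j}[n, n+1]`. -/
noncomputable def dyadic (j n : ℕ) : Set ℝ :=
  Set.Icc ((n : ℝ) / 2 ^ j) (((n : ℝ) + 1) / 2 ^ j)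

/-! Stopping-time argument. For `x ∈ I` the ball of radius `|I|` around `x` contains `I`, so
`∫_I |g| ≤ 2 |I| M_g(x)`; hence the oscillation of `f` on a dyadic interval `I` is at most
`2 E(I)`, where `E(I) = |I| inf_I M_g ≤ ∫_I M_g`. Select the maximal dyadic intervals with
`E(I) ≤ ε := 2 ‖M_g‖₁ / N`; absolute continuity of `∫ M_g` makes them cover `[0,1]` at a finite
depth. If the parent `I'` of a selected `I` was rejected, `ε < E(I') ≤ 2 E(I) ≤ 2 ∫_I M_g`, so
each selected interval carries more than `‖M_g‖₁ / N` of the mass of `M_g` and there are at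
most `N` of them. -/

lemma dyadic_left_lt_right (j n : ℕ) : (n : ℝ) / 2 ^ j < ((n : ℝ) + 1) / 2 ^ j := by
  gcongr
  linarith

lemma interior_dyadic (j n : ℕ) :
    interior (dyadic j n) = Ioo ((n : ℝ) / 2 ^ j) (((n : ℝ) + 1) / 2 ^ j) :=
  interior_Icc

lemma measurableSet_dyadic (j n : ℕ) : MeasurableSet (dyadic j n) :=
  measurableSet_Icc

lemma dyadic_zero_zero : dyadic 0 0 = Icc (0 : ℝ) 1 := by
  simp [dyadic]

lemma dyadic_subset_Icc_zero_one {j n : ℕ} (hn : n < 2 ^ j) : dyadic j n ⊆ Icc 0 1 := by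
  have hn' : (n : ℝ) + 1 ≤ 2 ^ j := by exact_mod_cast hn
  apply Icc_subset_Icc (by positivity)
  rwa [div_le_one (by positivity)]

lemma volume_dyadic (j n : ℕ) : volume (dyadic j n) = 2⁻¹ ^ j := by
  have hlen : ((n : ℝ) + 1) / 2 ^ j - n / 2 ^ j = 2⁻¹ ^ j := by rw [inv_pow]; field_simp; ring
  rw [dyadic, Real.volume_Icc, hlen, ENNReal.ofReal_pow (by norm_num),
    ENNReal.ofReal_inv_of_pos (by norm_num), ofReal_ofNat]

lemma dyadic_eq_union (j n : ℕ) :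
    dyadic j n = dyadic (j + 1) (2 * n) ∪ dyadic (j + 1) (2 * n + 1) := by
  have h2 : (0 : ℝ) < 2 ^ j := by positivity
  have e1 : ((2 * n : ℕ) : ℝ) / 2 ^ (j + 1) = n / 2 ^ j := by
    push_cast; rw [pow_succ]; field_simp
  have e2 : (((2 * n + 1 : ℕ) : ℝ) + 1) / 2 ^ (j + 1) = (n + 1) / 2 ^ j := by
    push_cast; rw [pow_succ]; field_simp; ring
  have e3 : ((2 * n : ℕ) : ℝ) + 1 = ((2 * n + 1 : ℕ) : ℝ) := by push_cast; ring
  rw [dyadic, dyadic, dyadic, e1, e2, e3, Icc_union_Icc_eq_Icc]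
  · rw [← e1]; exact (dyadic_left_lt_right _ _).le.trans_eq (by rw [e3])
  · rw [← e2]; exact (dyadic_left_lt_right _ _).le

lemma dyadic_subset_dyadic_div_two_pow {i j : ℕ} (hij : i ≤ j) (n : ℕ) :
    dyadic j n ⊆ dyadic i (n / 2 ^ (j - i)) := by
  set k := j - i
  set m := n / 2 ^ k
  have hj : (2 : ℝ) ^ j = 2 ^ k * 2 ^ i := by rw [← pow_add]; congr 1; omega
  have hlow : (m : ℝ) * 2 ^ k ≤ n := by exact_mod_cast Nat.div_mul_le_self n (2 ^ k)
  have hup : (n : ℝ) + 1 ≤ (m + 1) * 2 ^ k := by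
    have : n < m * 2 ^ k + 2 ^ k := Nat.lt_div_mul_add (Nat.two_pow_pos k)
    exact_mod_cast (show n + 1 ≤ (m + 1) * 2 ^ k by rw [add_mul, one_mul]; omega)
  have h2 : (0 : ℝ) < 2 ^ k := by positivity
  apply Icc_subset_Icc <;> rw [hj, ← div_div]
  · gcongr; rwa [le_div_iff₀ h2]
  · gcongr; rwa [div_le_iff₀ h2]

lemma disjoint_interior_dyadic {j m n : ℕ} (h : m ≠ n) :
    Disjoint (interior (dyadic j m)) (interior (dyadic j n)) := by
  wlog hmn : m < n generalizing m n
  · exact (this h.symm (lt_of_le_of_ne (not_lt.1 hmn) h.symm)).symm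
  have hmn' : (m : ℝ) + 1 ≤ n := by exact_mod_cast hmn
  rw [interior_dyadic, interior_dyadic]
  have hle : ((m : ℝ) + 1) / 2 ^ j ≤ n / 2 ^ j := by gcongr
  exact Ioo_disjoint_Ioo.2 ((min_le_left _ _).trans (hle.trans (le_max_right _ _)))

lemma exists_mem_dyadic {x : ℝ} (hx : x ∈ Icc (0 : ℝ) 1) (j : ℕ) :
    ∃ n < 2 ^ j, x ∈ dyadic j n := by
  induction j with
  | zero => exact ⟨0, by norm_num, dyadic_zero_zero ▸ hx⟩
  | succ j ih =>
    obtain ⟨n, hn, hxn⟩ := ih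
    rw [dyadic_eq_union] at hxn
    rcases hxn with h | h
    · exact ⟨2 * n, by rw [pow_succ]; omega, h⟩
    · exact ⟨2 * n + 1, by rw [pow_succ]; omega, h⟩

structure IsDyadicPartition (S : Finset (ℕ × ℕ)) : Prop where
  lt_two_pow : ∀ p ∈ S, p.2 < 2 ^ p.1
  pairwiseDisjoint : (S : Set (ℕ × ℕ)).PairwiseDisjoint fun p => interior (dyadic p.1 p.2)
  biUnion_eq : ⋃ p ∈ S, dyadic p.1 p.2 = Icc 0 1

lemma isDyadicPartition_singleton_zero : IsDyadicPartition {(0, 0)} where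
  lt_two_pow := by simp
  pairwiseDisjoint := by simp
  biUnion_eq := by simp [dyadic_zero_zero]

namespace IsDyadicPartition

variable {S : Finset (ℕ × ℕ)}

lemma card_pos (hS : IsDyadicPartition S) : 0 < S.card := by
  have h0 : (0 : ℝ) ∈ ⋃ p ∈ S, dyadic p.1 p.2 := hS.biUnion_eq ▸ left_mem_Icc.2 zero_le_one
  obtain ⟨p, hp, -⟩ := mem_iUnion₂.1 h0
  exact Finset.card_pos.2 ⟨p, hp⟩

lemma sum_setLIntegral_le (hS : IsDyadicPartition S) (F : ℝ → ℝ≥0∞) :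
    ∑ p ∈ S, ∫⁻ x in dyadic p.1 p.2, F x ≤ ∫⁻ x in Icc 0 1, F x := by
  have hint : ∀ p : ℕ × ℕ, ∫⁻ x in dyadic p.1 p.2, F x = ∫⁻ x in interior (dyadic p.1 p.2), F x :=
    fun p => by rw [interior_dyadic]; exact setLIntegral_congr Ioo_ae_eq_Icc.symm
  simp_rw [hint]
  rw [← lintegral_biUnion_finset hS.pairwiseDisjoint (fun _ _ => isOpen_interior.measurableSet)]
  refine lintegral_mono_set (iUnion₂_subset fun p hp => ?_)
  exact interior_subset.trans
    (hS.biUnion_eq ▸ subset_biUnion_of_mem (u := fun p => dyadic p.1 p.2) hp)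

lemma exists_fin_enum (hS : IsDyadicPartition S) {Q : ℕ × ℕ → Prop} (hQ : ∀ p ∈ S, Q p) :
    ∃ jn : Fin S.card → ℕ × ℕ, (∀ i, (jn i).2 < 2 ^ (jn i).1) ∧
      (∀ i i', i ≠ i' →
        Disjoint (interior (dyadic (jn i).1 (jn i).2)) (interior (dyadic (jn i').1 (jn i').2))) ∧
      (⋃ i, dyadic (jn i).1 (jn i).2) = Icc 0 1 ∧ ∀ i, Q (jn i) := by
  refine ⟨fun i => S.equivFin.symm i, fun i => hS.lt_two_pow _ (S.equivFin.symm i).2,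
    fun i i' hii' => hS.pairwiseDisjoint (S.equivFin.symm i).2 (S.equivFin.symm i').2 ?_, ?_,
    fun i => hQ _ (S.equivFin.symm i).2⟩
  · exact fun h => hii' (S.equivFin.symm.injective (Subtype.ext h))
  · rw [← hS.biUnion_eq, ← Finset.set_biUnion_coe, biUnion_eq_iUnion]
    exact S.equivFin.symm.surjective.iUnion_comp fun p : S => dyadic p.1.1 p.1.2

end IsDyadicPartition

-- The ancestor of `dyadic j n` at level `i ≤ j` is `dyadic i (n / 2 ^ (j - i))`.
def IsMaximalDyadic (P : ℕ → ℕ → Prop) (j n : ℕ) : Prop :=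
  P j n ∧ ∀ i < j, ¬ P i (n / 2 ^ (j - i))

lemma div_two_pow_sub_div_two_pow {i i' j : ℕ} (hi' : i' ≤ i) (hi : i ≤ j) (n : ℕ) :
    n / 2 ^ (j - i) / 2 ^ (i - i') = n / 2 ^ (j - i') := by
  rw [Nat.div_div_eq_div_mul, ← pow_add]
  congr 2
  omega

lemma div_two_pow_sub_lt {i j n : ℕ} (hij : i ≤ j) (hn : n < 2 ^ j) : n / 2 ^ (j - i) < 2 ^ i := by
  rwa [Nat.div_lt_iff_lt_mul (Nat.two_pow_pos _), ← pow_add, Nat.add_sub_cancel' hij]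

lemma disjoint_interior_of_isMaximalDyadic {P : ℕ → ℕ → Prop} {p q : ℕ × ℕ}
    (hp : IsMaximalDyadic P p.1 p.2) (hq : IsMaximalDyadic P q.1 q.2) (hpq : p ≠ q) :
    Disjoint (interior (dyadic p.1 p.2)) (interior (dyadic q.1 q.2)) := by
  wlog hle : p.1 ≤ q.1 generalizing p q
  · exact (this hq hp hpq.symm (le_of_not_ge hle)).symm
  have hanc : q.2 / 2 ^ (q.1 - p.1) ≠ p.2 := by
    intro h
    rcases hle.lt_or_eq with hlt | heq
    · exact hq.2 p.1 hlt (h ▸ hp.1)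
    · exact hpq (Prod.ext heq (by rw [← h, heq, Nat.sub_self, pow_zero, Nat.div_one]))
  exact (disjoint_interior_dyadic hanc.symm).mono_right
    (interior_mono (dyadic_subset_dyadic_div_two_pow hle q.2))

lemma exists_isMaximalDyadic_mem {P : ℕ → ℕ → Prop} {J : ℕ} (hJ : ∀ n < 2 ^ J, P J n) {x : ℝ}
    (hx : x ∈ Icc (0 : ℝ) 1) :
    ∃ j ≤ J, ∃ n < 2 ^ j, IsMaximalDyadic P j n ∧ x ∈ dyadic j n := by
  classical
  obtain ⟨m, hm, hxm⟩ := exists_mem_dyadic hx J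
  -- take the coarsest ancestor of `dyadic J m` on which `P` holds
  have hex : ∃ i, i ≤ J ∧ P i (m / 2 ^ (J - i)) := ⟨J, le_rfl, by simpa using hJ m hm⟩
  obtain ⟨hiJ, hPi⟩ := Nat.find_spec hex
  refine ⟨Nat.find hex, hiJ, _, div_two_pow_sub_lt hiJ hm, ⟨hPi, fun i hi hP => ?_⟩,
    dyadic_subset_dyadic_div_two_pow hiJ m hxm⟩
  rw [div_two_pow_sub_div_two_pow hi.le hiJ] at hP
  exact Nat.find_min hex hi ⟨by omega, hP⟩

theorem exists_isDyadicPartition_isMaximalDyadic (P : ℕ → ℕ → Prop) (J : ℕ)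
    (hJ : ∀ n < 2 ^ J, P J n) :
    ∃ S : Finset (ℕ × ℕ), IsDyadicPartition S ∧ ∀ p ∈ S, IsMaximalDyadic P p.1 p.2 := by
  classical
  let S := (Finset.range (J + 1) ×ˢ Finset.range (2 ^ J)).filter
    fun p => p.2 < 2 ^ p.1 ∧ IsMaximalDyadic P p.1 p.2
  have hmem : ∀ p ∈ S, p.2 < 2 ^ p.1 ∧ IsMaximalDyadic P p.1 p.2 :=
    fun p hp => (Finset.mem_filter.1 hp).2
  refine ⟨S, ⟨fun p hp => (hmem p hp).1, fun p hp q hq hpq =>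
    disjoint_interior_of_isMaximalDyadic (hmem p hp).2 (hmem q hq).2 hpq, ?_⟩,
    fun p hp => (hmem p hp).2⟩
  refine (iUnion₂_subset fun p hp => dyadic_subset_Icc_zero_one (hmem p hp).1).antisymm
    fun x hx => ?_
  obtain ⟨j, hjJ, n, hn, hmax, hxn⟩ := exists_isMaximalDyadic_mem hJ hx
  have hnJ : n < 2 ^ J := hn.trans_le (Nat.pow_le_pow_right two_pos hjJ)
  have hjn : (j, n) ∈ S := Finset.mem_filter.2
    ⟨Finset.mem_product.2 ⟨Finset.mem_range.2 (by omega), Finset.mem_range.2 hnJ⟩, hn, hmax⟩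
  exact mem_iUnion₂.2 ⟨_, hjn, hxn⟩

section LowerMass

variable {α : Type*} [MeasurableSpace α]

noncomputable def lowerMass (μ : Measure α) (F : α → ℝ≥0∞) (s : Set α) : ℝ≥0∞ :=
  μ s * ⨅ x ∈ s, F x

lemma lowerMass_le_setLIntegral (μ : Measure α) (F : α → ℝ≥0∞) {s : Set α}
    (hs : MeasurableSet s) : lowerMass μ F s ≤ ∫⁻ x in s, F x ∂μ := by
  rw [lowerMass, mul_comm, ← setLIntegral_const]
  exact setLIntegral_mono' hs fun x hx => biInf_le F hx

lemma lowerMass_le_mul_of_subset (μ : Measure α) (F : α → ℝ≥0∞) {s t : Set α} {c : ℝ≥0∞}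
    (hts : t ⊆ s) (hμ : μ s ≤ c * μ t) : lowerMass μ F s ≤ c * lowerMass μ F t := by
  rw [lowerMass, lowerMass, ← mul_assoc]
  exact mul_le_mul' hμ (biInf_mono hts)

end LowerMass

lemma lowerMass_dyadic_div_two_le (F : ℝ → ℝ≥0∞) (j n : ℕ) :
    lowerMass volume F (dyadic j (n / 2)) ≤ 2 * lowerMass volume F (dyadic (j + 1) n) := by
  refine lowerMass_le_mul_of_subset _ _
    (by simpa using dyadic_subset_dyadic_div_two_pow (Nat.le_succ j) n) (le_of_eq ?_)
  rw [volume_dyadic, volume_dyadic, pow_succ, mul_comm, mul_assoc,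
    ENNReal.inv_mul_cancel two_ne_zero ofNat_ne_top, mul_one]

lemma exists_forall_setLIntegral_dyadic_lt {F : ℝ → ℝ≥0∞} (hF : ∫⁻ x in Icc 0 1, F x ≠ ⊤)
    {ε : ℝ≥0∞} (hε : ε ≠ 0) : ∃ J, ∀ n < 2 ^ J, ∫⁻ x in dyadic J n, F x < ε := by
  obtain ⟨δ, hδ, hδε⟩ := exists_pos_setLIntegral_lt_of_measure_lt hF hε
  obtain ⟨J, hJ⟩ := ENNReal.exists_inv_two_pow_lt hδ.ne'
  refine ⟨J, fun n hn => ?_⟩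
  have h := hδε (dyadic J n)
    ((Measure.restrict_apply_le _ _).trans_lt (volume_dyadic J n ▸ hJ))
  rwa [Measure.restrict_restrict (measurableSet_dyadic J n),
    inter_eq_self_of_subset_left (dyadic_subset_Icc_zero_one hn)] at h

lemma card_le_of_forall_div_le {ι : Type*} (S : Finset ι) (ν : ι → ℝ≥0∞) {A : ℝ≥0∞} {N : ℕ}
    (hA0 : A ≠ 0) (hA : A ≠ ⊤) (hN : N ≠ 0) (hsum : ∑ i ∈ S, ν i ≤ A)
    (hle : ∀ i ∈ S, A / N ≤ ν i) : S.card ≤ N := by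
  have hN' : (N : ℝ≥0∞) ≠ 0 := Nat.cast_ne_zero.2 hN
  have hAN0 : A / N ≠ 0 := ENNReal.div_ne_zero.2 ⟨hA0, natCast_ne_top N⟩
  have hANtop : A / N ≠ ⊤ := ENNReal.div_ne_top hA hN'
  have h : (S.card : ℝ≥0∞) * (A / N) ≤ N * (A / N) := calc
    _ = S.card • (A / N) := (nsmul_eq_mul _ _).symm
    _ ≤ ∑ i ∈ S, ν i := Finset.card_nsmul_le_sum S ν _ hle
    _ ≤ A := hsum
    _ = N * (A / N) := (ENNReal.mul_div_cancel hN' (natCast_ne_top N)).symm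
  exact_mod_cast (ENNReal.mul_le_mul_iff_left hAN0 hANtop).1 h

lemma lt_two_mul_setLIntegral_of_isMaximalDyadic {F : ℝ → ℝ≥0∞} {ε : ℝ≥0∞} {j n : ℕ}
    (h : IsMaximalDyadic (fun j n => lowerMass volume F (dyadic j n) ≤ ε) j n) (hj : j ≠ 0) :
    ε < 2 * ∫⁻ x in dyadic j n, F x := by
  obtain ⟨i, rfl⟩ := Nat.exists_eq_succ_of_ne_zero hj
  have hparent : ε < lowerMass volume F (dyadic i (n / 2)) := by
    simpa using h.2 i i.lt_succ_self
  calc ε < _ := hparent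
    _ ≤ 2 * lowerMass volume F (dyadic (i + 1) n) := lowerMass_dyadic_div_two_le F i n
    _ ≤ _ := by gcongr; exact lowerMass_le_setLIntegral _ _ (measurableSet_dyadic _ _)

theorem exists_isDyadicPartition_card_le_lowerMass_le (F : ℝ → ℝ≥0∞)
    (hF : ∫⁻ x in Icc 0 1, F x ≠ ⊤) {N : ℕ} (hN : 1 ≤ N) :
    ∃ S, IsDyadicPartition S ∧ S.card ≤ N ∧
      ∀ p ∈ S, lowerMass volume F (dyadic p.1 p.2) ≤ 2 * ((∫⁻ x in Icc 0 1, F x) / N) := by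
  set A := ∫⁻ x in Icc 0 1, F x
  set ε := 2 * (A / N)
  by_cases hroot : lowerMass volume F (dyadic 0 0) ≤ ε
  · exact ⟨{(0, 0)}, isDyadicPartition_singleton_zero, by simpa using hN, by simpa using hroot⟩
  have hA0 : A ≠ 0 := fun hA0 => hroot <| calc
    lowerMass volume F (dyadic 0 0) ≤ A := by
      simpa only [dyadic_zero_zero] using
        lowerMass_le_setLIntegral volume F (measurableSet_dyadic 0 0)
    _ = 0 := hA0
    _ ≤ ε := zero_le
  have hε : ε ≠ 0 := mul_ne_zero two_ne_zero (ENNReal.div_ne_zero.2 ⟨hA0, natCast_ne_top N⟩)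
  obtain ⟨J, hJ⟩ := exists_forall_setLIntegral_dyadic_lt hF hε
  obtain ⟨S, hS, hmax⟩ := exists_isDyadicPartition_isMaximalDyadic
    (fun j n => lowerMass volume F (dyadic j n) ≤ ε) J
    fun n hn => (lowerMass_le_setLIntegral _ _ (measurableSet_dyadic J n)).trans (hJ n hn).le
  refine ⟨S, hS, card_le_of_forall_div_le S _ hA0 hF (by omega) (hS.sum_setLIntegral_le F)
    fun p hp => ?_, fun p hp => (hmax p hp).1⟩
  have hp1 : p.1 ≠ 0 := by
    intro h0
    have h2 : p.2 = 0 := by simpa [h0] using hS.lt_two_pow p hp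
    exact hroot (by simpa [h0, h2] using (hmax p hp).1)
  exact ((ENNReal.mul_lt_mul_iff_right two_ne_zero ofNat_ne_top).1
    (lt_two_mul_setLIntegral_of_isMaximalDyadic (hmax p hp) hp1)).le

lemma locErr_le {f : ℝ → ℝ} {I : Set ℝ} {c B : ℝ} (hB : 0 ≤ B) (h : ∀ x ∈ I, |f x - c| ≤ B) :
    locErr f I ≤ B :=
  (ciInf_le ⟨0, by rintro _ ⟨c', rfl⟩; exact Real.iSup_nonneg fun _ => abs_nonneg _⟩ c).trans
    (Real.iSup_le (fun x => h x x.2) hB)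

lemma ofReal_locErr_Icc_le {f g : ℝ → ℝ} {a b : ℝ} (hg : IntegrableOn g (Icc a b))
    (hf : ∀ x ∈ Icc a b, f x = f a + ∫ t in a..x, g t) :
    ENNReal.ofReal (locErr f (Icc a b)) ≤ ∫⁻ t in Ioo a b, ENNReal.ofReal |g t| := by
  have hg' : IntegrableOn (fun t => |g t|) (Ioc a b) := (hg.mono_set Ioc_subset_Icc_self).abs
  have hbound : ∀ x ∈ Icc a b, |f x - f a| ≤ ∫ t in Ioc a b, |g t| := by
    intro x hx
    rw [hf x hx, add_sub_cancel_left]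
    calc |∫ t in a..x, g t| ≤ ∫ t in a..x, |g t| :=
          intervalIntegral.abs_integral_le_integral_abs hx.1
      _ = ∫ t in Ioc a x, |g t| := intervalIntegral.integral_of_le hx.1
      _ ≤ ∫ t in Ioc a b, |g t| := setIntegral_mono_set hg'
          (ae_of_all _ fun _ => abs_nonneg _) (Ioc_subset_Ioc_right hx.2).eventuallyLE
  calc ENNReal.ofReal (locErr f (Icc a b)) ≤ ENNReal.ofReal (∫ t in Ioc a b, |g t|) :=
        ENNReal.ofReal_le_ofReal
          (locErr_le (setIntegral_nonneg measurableSet_Ioc fun _ _ => abs_nonneg _) hbound)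
    _ = ∫⁻ t in Ioc a b, ENNReal.ofReal |g t| :=
        ofReal_integral_eq_lintegral_ofReal hg' (ae_of_all _ fun _ => abs_nonneg _)
    _ = ∫⁻ t in Ioo a b, ENNReal.ofReal |g t| := setLIntegral_congr Ioo_ae_eq_Ioc.symm

lemma setLIntegral_Ioo_le_two_mul_lowerMass (g : ℝ → ℝ) {a b : ℝ} (hab : a < b) :
    ∫⁻ t in Ioo a b, ENNReal.ofReal |g t| ≤ 2 * lowerMass volume (maxFn g) (Icc a b) := by
  set r := b - a
  have hr : 0 < r := sub_pos.2 hab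
  have hc0 : ENNReal.ofReal (2 * r) ≠ 0 := (ENNReal.ofReal_pos.2 (by positivity)).ne'
  have hle : ∀ x ∈ Icc a b,
      (∫⁻ t in Ioo a b, ENNReal.ofReal |g t|) / ENNReal.ofReal (2 * r) ≤ maxFn g x := by
    intro x hx
    refine le_trans ?_ (le_iSup _ (⟨r, hr⟩ : {r : ℝ // 0 < r}))
    gcongr <;> dsimp only <;> linarith [hx.1, hx.2]
  have h := le_iInf₂ hle
  rw [ENNReal.div_le_iff hc0 ofReal_ne_top] at h
  refine h.trans_eq ?_
  rw [lowerMass, Real.volume_Icc, ENNReal.ofReal_mul zero_le_two, ofReal_ofNat]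
  ring

lemma ofReal_locErr_dyadic_le {f g : ℝ → ℝ} (hg : IntegrableOn g (Icc 0 1))
    (hf : ∀ x ∈ Icc (0 : ℝ) 1, f x = f 0 + ∫ t in (0 : ℝ)..x, g t) {j n : ℕ} (hn : n < 2 ^ j) :
    ENNReal.ofReal (locErr f (dyadic j n)) ≤ 2 * lowerMass volume (maxFn g) (dyadic j n) := by
  have hsub := dyadic_subset_Icc_zero_one hn
  have hab := dyadic_left_lt_right j n
  have ha : (n : ℝ) / 2 ^ j ∈ Icc (0 : ℝ) 1 := hsub (left_mem_Icc.2 hab.le)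
  have hint : ∀ {u v}, u ∈ Icc (0 : ℝ) 1 → v ∈ Icc (0 : ℝ) 1 → IntervalIntegrable g volume u v :=
    fun hu hv => (hg.mono_set (uIcc_subset_Icc hu hv)).intervalIntegrable
  refine (ofReal_locErr_Icc_le (hg.mono_set hsub) fun x hx => ?_).trans
    (setLIntegral_Ioo_le_two_mul_lowerMass g hab)
  rw [hf x (hsub hx), hf _ ha, add_assoc,
    intervalIntegral.integral_add_adjacent_intervals (hint (left_mem_Icc.2 zero_le_one) ha)
      (hint ha (hsub hx))]

theorem stmt6_general (f g : ℝ → ℝ) (hgint : Integrable g)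
    (hf : ∀ x ∈ Set.Icc (0:ℝ) 1, f x = f 0 + ∫ t in (0:ℝ)..x, g t)
    (hM : ∫⁻ t in Set.Icc (0:ℝ) 1, maxFn g t < ⊤) :
    ∀ N : ℕ, 1 ≤ N → ∃ M : ℕ, 1 ≤ M ∧ M ≤ N ∧ ∃ jn : Fin M → ℕ × ℕ,
      (∀ i, (jn i).2 < 2 ^ (jn i).1) ∧
      (∀ i i', i ≠ i' →
        Disjoint (interior (dyadic (jn i).1 (jn i).2)) (interior (dyadic (jn i').1 (jn i').2))) ∧
      (⋃ i, dyadic (jn i).1 (jn i).2) = Set.Icc (0:ℝ) 1 ∧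
      ∀ i, locErr f (dyadic (jn i).1 (jn i).2) ≤
        4 * (∫⁻ t in Set.Icc (0:ℝ) 1, maxFn g t).toReal / N := by
  intro N hN
  set A := ∫⁻ t in Icc (0 : ℝ) 1, maxFn g t
  obtain ⟨S, hS, hcard, hmass⟩ :=
    exists_isDyadicPartition_card_le_lowerMass_le (maxFn g) hM.ne hN
  have herr : ∀ p ∈ S, locErr f (dyadic p.1 p.2) ≤ 4 * A.toReal / N := by
    intro p hp
    have hfin : 4 * (A / N) ≠ ⊤ :=
      mul_ne_top ofNat_ne_top (div_ne_top hM.ne (Nat.cast_ne_zero.2 (by omega)))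
    have h := calc
      ENNReal.ofReal (locErr f (dyadic p.1 p.2))
          ≤ 2 * lowerMass volume (maxFn g) (dyadic p.1 p.2) :=
        ofReal_locErr_dyadic_le hgint.integrableOn hf (hS.lt_two_pow p hp)
      _ ≤ 2 * (2 * (A / N)) := by gcongr; exact hmass p hp
      _ = 4 * (A / N) := by ring
    rw [ENNReal.ofReal_le_iff_le_toReal hfin, toReal_mul, toReal_div, toReal_natCast] at h
    simpa [mul_div_assoc] using h
  obtain ⟨jn, hlt, hdisj, hunion, hjn⟩ := hS.exists_fin_enum herr
  exact ⟨S.card, hS.card_pos, hcard, jn, hlt, hdisj, hunion, hjn⟩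

/-- If `f` is absolutely continuous with derivative `g` supported on `[0,1]` and the
maximal function of `g` is integrable on `[0,1]`, then for every `N ≥ 1` there is a
partition of `[0,1]` into at most `N` dyadic intervals whose global uniform-norm
piecewise-constant error is at most `4 ‖M_g‖_{L¹([0,1])} / N`. -/
theorem stmt6 (f g : ℝ → ℝ) (hgint : Integrable g)
    (hg0 : ∀ t : ℝ, t ∉ Set.Icc (0:ℝ) 1 → g t = 0)
    (hf : ∀ x ∈ Set.Icc (0:ℝ) 1, f x = f 0 + ∫ t in (0:ℝ)..x, g t)
    (hM : ∫⁻ t in Set.Icc (0:ℝ) 1, maxFn g t < ⊤) :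
    ∀ N : ℕ, 1 ≤ N → ∃ M : ℕ, 1 ≤ M ∧ M ≤ N ∧ ∃ jn : Fin M → ℕ × ℕ,
      (∀ i, (jn i).2 < 2 ^ (jn i).1) ∧
      (∀ i i', i ≠ i' →
        Disjoint (interior (dyadic (jn i).1 (jn i).2)) (interior (dyadic (jn i').1 (jn i').2))) ∧
      (⋃ i, dyadic (jn i).1 (jn i).2) = Set.Icc (0:ℝ) 1 ∧
      ∀ i, locErr f (dyadic (jn i).1 (jn i).2) ≤
        4 * (∫⁻ t in Set.Icc (0:ℝ) 1, maxFn g t).toReal / N :=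
  stmt6_general f g hgint hf hM
end
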